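/- If X^1,...,X^N are exchangeable random vectors and for each N the first member X^{1,N} converges to a limit U^1 in L^p as N → ∞, then the sample mean X̄^N = (1/N) Σ_{n=1}^N X^{n,N} also converges in L^p to U^1's expectation provided the U^n are i.i.d. copies forming exchangeable pairs with the X^n; more precisely: if the array [(X^{n,N}, U^n)]_{n=1}^N has exchangeable columns, U^1,...,U^N are i.i.d. with U^1 ∈ L^p, and ‖X^{1,N} − U^1‖_p → 0, then ‖X̄^N − E(U^1)‖_p → 0 as N → ∞, for any 1 ≤ p < ∞. -/

import Mathlib

open MeasureTheory ProbabilityTheory Filter Finset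
open scoped ENNReal Topology

/-! Write `X̄ᴺ - E U¹ = (X̄ᴺ - Ūᴺ) + (Ūᴺ - E U¹)`. Exchangeability of the columns makes every
`X^{n,N} - Uⁿ` distributed like `X^{1,N} - U¹`, so by the triangle inequality
`‖X̄ᴺ - Ūᴺ‖_p ≤ ‖X^{1,N} - U¹‖_p → 0`, while `‖Ūᴺ - E U¹‖_p → 0` is the `Lᵖ` law of large
numbers for the i.i.d. sequence `U`. -/

section

variable {Ω : Type*} [MeasurableSpace Ω] {P : Measure Ω}

lemma ProbabilityTheory.identDistrib_apply_of_map_perm_eq {ι β : Type*} [MeasurableSpace β]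
    {Y : ι → Ω → β} (hY : ∀ i, Measurable (Y i)) {π : Equiv.Perm ι}
    (h : P.map (fun ω i => Y (π i) ω) = P.map (fun ω i => Y i ω)) (i : ι) :
    IdentDistrib (Y (π i)) (Y i) P P :=
  (⟨(measurable_pi_lambda _ fun j => hY (π j)).aemeasurable,
      (measurable_pi_lambda _ hY).aemeasurable, h⟩ :
    IdentDistrib (fun ω j => Y (π j) ω) (fun ω j => Y j ω) P P).comp (measurable_pi_apply i)

variable {E : Type*} [NormedAddCommGroup E] {p : ℝ≥0∞}

lemma MeasureTheory.tendsto_eLpNorm_sub_of_tendsto_of_tendsto {α : Type*} {l : Filter α}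
    {f g : α → Ω → E} {h : Ω → E} (hf : ∀ a, AEStronglyMeasurable (f a) P)
    (hg : ∀ a, AEStronglyMeasurable (g a) P) (hh : AEStronglyMeasurable h P) (hp : 1 ≤ p)
    (hfg : Tendsto (fun a => eLpNorm (f a - g a) p P) l (𝓝 0))
    (hgh : Tendsto (fun a => eLpNorm (g a - h) p P) l (𝓝 0)) :
    Tendsto (fun a => eLpNorm (f a - h) p P) l (𝓝 0) := by
  refine tendsto_of_tendsto_of_tendsto_of_le_of_le tendsto_const_nhds
    (by simpa using hfg.add hgh) (fun _ => zero_le) fun a => ?_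
  calc eLpNorm (f a - h) p P = eLpNorm ((f a - g a) + (g a - h)) p P := by rw [sub_add_sub_cancel]
    _ ≤ _ := eLpNorm_add_le ((hf a).sub (hg a)) ((hg a).sub hh) hp

variable [NormedSpace ℝ E]

lemma MeasureTheory.eLpNorm_inv_card_smul_sum_le {ι : Type*} (hp : 1 ≤ p) (s : Finset ι)
    {f : ι → Ω → E} (hf : ∀ i ∈ s, AEStronglyMeasurable (f i) P) {C : ℝ≥0∞}
    (hC : ∀ i ∈ s, eLpNorm (f i) p P ≤ C) :
    eLpNorm (fun ω => (#s : ℝ)⁻¹ • ∑ i ∈ s, f i ω) p P ≤ C := by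
  rcases s.eq_empty_or_nonempty with rfl | hs
  · simp
  have hcard : (#s : ℝ≥0∞) ≠ 0 := by exact_mod_cast hs.card_pos.ne'
  calc eLpNorm (fun ω => (#s : ℝ)⁻¹ • ∑ i ∈ s, f i ω) p P
      = (#s : ℝ≥0∞)⁻¹ * eLpNorm (∑ i ∈ s, f i) p P := by
        rw [show (fun ω => (#s : ℝ)⁻¹ • ∑ i ∈ s, f i ω) = (#s : ℝ)⁻¹ • ∑ i ∈ s, f i by
            ext ω; simp only [Pi.smul_apply, Finset.sum_apply],
          eLpNorm_const_smul, enorm_inv (by simpa using hs.ne_empty), Real.enorm_natCast]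
    _ ≤ (#s : ℝ≥0∞)⁻¹ * ∑ i ∈ s, eLpNorm (f i) p P := by gcongr; exact eLpNorm_sum_le hf hp
    _ ≤ (#s : ℝ≥0∞)⁻¹ * (#s * C) := by gcongr; simpa using Finset.sum_le_card_nsmul s _ C hC
    _ = C := by rw [← mul_assoc, ENNReal.inv_mul_cancel hcard (ENNReal.natCast_ne_top _), one_mul]

variable [CompleteSpace E] [MeasurableSpace E] [BorelSpace E]

lemma ProbabilityTheory.strong_law_Lp_fin (U : ℕ → Ω → E) (hp : 1 ≤ p) (hp' : p ≠ ∞)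
    (hUindep : iIndepFun U P) (hUid : ∀ n, IdentDistrib (U n) (U 0) P P)
    (hULp : MemLp (U 0) p P) :
    Tendsto (fun N : ℕ =>
        eLpNorm (fun ω => ((N + 1 : ℕ) : ℝ)⁻¹ • ∑ n : Fin (N + 1), U n ω - ∫ ω', U 0 ω' ∂P) p P)
      atTop (𝓝 0) := by
  have h := (strong_law_Lp hp hp' U hULp (fun _ _ hij => hUindep.indepFun hij) hUid).comp
    (tendsto_add_atTop_nat 1)
  refine h.congr fun N => ?_
  simp only [Function.comp_apply, Finset.sum_range]

end

theorem sample_mean_tendsto_of_exchangeable_general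
    {Ω : Type*} [MeasurableSpace Ω] (P : Measure Ω)
    {m : ℕ}
    (X : (N : ℕ) → Fin (N + 1) → Ω → EuclideanSpace ℝ (Fin m))
    (U : ℕ → Ω → EuclideanSpace ℝ (Fin m))
    (hXmeas : ∀ N n, Measurable (X N n)) (hUmeas : ∀ n, Measurable (U n))
    (p : ℝ≥0∞) (hp : 1 ≤ p) (hp' : p ≠ ∞)
    (hexch : ∀ (N : ℕ) (π : Equiv.Perm (Fin (N + 1))),
      P.map (fun ω => fun n : Fin (N + 1) => (X N (π n) ω, U (π n : ℕ) ω))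
        = P.map (fun ω => fun n : Fin (N + 1) => (X N n ω, U (n : ℕ) ω)))
    (hUindep : iIndepFun U P)
    (hUid : ∀ n, IdentDistrib (U n) (U 0) P P)
    (hULp : MemLp (U 0) p P)
    (hconv : Tendsto (fun N => eLpNorm (fun ω => X N 0 ω - U 0 ω) p P) atTop (𝓝 0)) :
    Tendsto (fun N =>
        eLpNorm (fun ω => (((N + 1 : ℕ) : ℝ))⁻¹ • ∑ n : Fin (N + 1), X N n ω - ∫ ω', U 0 ω' ∂P) p P)
      atTop (𝓝 0) := by
  have hcolumn (N : ℕ) (n : Fin (N + 1)) : eLpNorm (fun ω => X N n ω - U n ω) p P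
      = eLpNorm (fun ω => X N 0 ω - U 0 ω) p P := by
    have h := identDistrib_apply_of_map_perm_eq (Y := fun k ω => (X N k ω, U k ω))
      (fun k => (hXmeas N k).prodMk (hUmeas k)) (hexch N (Equiv.swap 0 n)) 0
    rw [Equiv.swap_apply_left] at h
    exact (h.comp (measurable_fst.sub measurable_snd)).eLpNorm_eq p
  have hmean : Tendsto (fun N : ℕ => eLpNorm
      ((fun ω => ((N + 1 : ℕ) : ℝ)⁻¹ • ∑ n : Fin (N + 1), X N n ω)
        - fun ω => ((N + 1 : ℕ) : ℝ)⁻¹ • ∑ n : Fin (N + 1), U n ω) p P) atTop (𝓝 0) := by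
    refine tendsto_of_tendsto_of_tendsto_of_le_of_le tendsto_const_nhds hconv
      (fun _ => zero_le) fun N => ?_
    have h := eLpNorm_inv_card_smul_sum_le hp univ
      (fun n _ => ((hXmeas N n).sub (hUmeas n)).aestronglyMeasurable)
      (fun n _ => (hcolumn N n).le)
    rw [card_univ, Fintype.card_fin] at h
    refine (congrArg (eLpNorm · p P) ?_).trans_le h
    ext ω
    simp only [Pi.sub_apply, sum_sub_distrib, smul_sub]
  exact tendsto_eLpNorm_sub_of_tendsto_of_tendsto
    (fun N => by fun_prop (disch := exact hXmeas N _))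
    (fun N => by fun_prop (disch := exact hUmeas _)) aestronglyMeasurable_const hp hmean
    (strong_law_Lp_fin U hp hp' hUindep hUid hULp)

/-- If the array of pairs `[(X^{n,N}, Uⁿ)]` has exchangeable columns, the `Uⁿ` are i.i.d.
with `U¹ ∈ Lᵖ`, and `‖X^{1,N} − U¹‖_p → 0`, then the sample mean `X̄ᴺ` converges in `Lᵖ`
to `E(U¹)` as `N → ∞`. -/
theorem sample_mean_tendsto_of_exchangeable
    {Ω : Type*} [MeasurableSpace Ω] (P : Measure Ω) [IsProbabilityMeasure P]
    {m : ℕ}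
    (X : (N : ℕ) → Fin (N + 1) → Ω → EuclideanSpace ℝ (Fin m))
    (U : ℕ → Ω → EuclideanSpace ℝ (Fin m))
    (hXmeas : ∀ N n, Measurable (X N n)) (hUmeas : ∀ n, Measurable (U n))
    (p : ℝ≥0∞) (hp : 1 ≤ p) (hp' : p ≠ ∞)
    (hexch : ∀ (N : ℕ) (π : Equiv.Perm (Fin (N + 1))),
      P.map (fun ω => fun n : Fin (N + 1) => (X N (π n) ω, U (π n : ℕ) ω))
        = P.map (fun ω => fun n : Fin (N + 1) => (X N n ω, U (n : ℕ) ω)))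
    (hUindep : iIndepFun U P)
    (hUid : ∀ n, IdentDistrib (U n) (U 0) P P)
    (hULp : MemLp (U 0) p P)
    (hconv : Tendsto (fun N => eLpNorm (fun ω => X N 0 ω - U 0 ω) p P) atTop (𝓝 0)) :
    Tendsto (fun N =>
        eLpNorm (fun ω => (((N + 1 : ℕ) : ℝ))⁻¹ • ∑ n : Fin (N + 1), X N n ω - ∫ ω', U 0 ω' ∂P) p P)
      atTop (𝓝 0) :=
  sample_mean_tendsto_of_exchangeable_general P X U hXmeas hUmeas p hp hp' hexch hUindep hUid hULp
    hconv
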